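/- Let N' be obtained from a network N by an E6 operation: splitting m reactions C(j) -> D(j) into C(j) -> Z(j) -> D(j) with new complexes Z(j) involving m+i new species, such that the new-species rows of the stoichiometric matrix of N' have rank m. Then delta(N') = delta(N). -/

import Mathlib

open Submodule

/-- A complex on `s` species: a vector of nonnegative integers. -/
abbrev Cplx (s : ℕ) := Fin s → ℕ

/-- The real vector associated to a complex. -/
def toR {s : ℕ} (C : Cplx s) : Fin s → ℝ := fun i => (C i : ℝ)

/-- A chemical reaction network on `s` species, given by its set of reactions
(ordered pairs of distinct complexes). -/
structure Network (s : ℕ) where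
  reactions : Finset (Cplx s × Cplx s)
  ne : ∀ r ∈ reactions, r.1 ≠ r.2

namespace Network

variable {s : ℕ}

/-- The complexes of a network: all sources and targets of reactions. -/
def complexes (N : Network s) : Finset (Cplx s) :=
  N.reactions.image Prod.fst ∪ N.reactions.image Prod.snd

/-- One (undirected) step in the reaction graph. -/
def step (N : Network s) (C D : Cplx s) : Prop :=
  (C, D) ∈ N.reactions ∨ (D, C) ∈ N.reactions

/-- Being connected by a path in the undirected reaction graph. -/
def linked (N : Network s) : Cplx s → Cplx s → Prop :=
  Relation.ReflTransGen N.step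

/-- `C` and `D` are complexes of `N` lying in a common linkage class. -/
def sameLinkageClass (N : Network s) (C D : Cplx s) : Prop :=
  C ∈ N.complexes ∧ D ∈ N.complexes ∧ N.linked C D

/-- The linkage class of a complex `C`. -/
def linkageClass (N : Network s) (C : Cplx s) : Set (Cplx s) :=
  {D | N.linked C D}

/-- The number of complexes `c_N`. -/
def numComplexes (N : Network s) : ℕ := N.complexes.card

/-- The number of linkage classes `ℓ_N`. -/
noncomputable def numLinkage (N : Network s) : ℕ :=
  Set.ncard {S : Set (Cplx s) | ∃ C ∈ N.complexes, S = N.linkageClass C}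

/-- The number of reactions `r_N`. -/
def numReactions (N : Network s) : ℕ := N.reactions.card

/-- The stoichiometric subspace: the real span of all reaction vectors. -/
def stoichSubspace (N : Network s) : Submodule ℝ (Fin s → ℝ) :=
  Submodule.span ℝ {v | ∃ r ∈ N.reactions, v = toR r.2 - toR r.1}

/-- The rank of the network. -/
noncomputable def rank (N : Network s) : ℕ :=
  Module.finrank ℝ N.stoichSubspace

/-- The deficiency `δ(N) = c_N - ℓ_N - rk(N)`. -/
noncomputable def deficiency (N : Network s) : ℤ :=
  (N.numComplexes : ℤ) - N.numLinkage - N.rank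

/-- The cyclomatic number `cyc(N) = r_N - c_N + ℓ_N`. -/
noncomputable def cyc (N : Network s) : ℤ :=
  (N.numReactions : ℤ) - N.numComplexes + N.numLinkage

end Network

/-- Extend a complex on the old species by zeros on the `k` new species. -/
def ext {s k : ℕ} (C : Cplx s) : Cplx (s + k) := Fin.append C 0

/-- Projection onto the coordinates of the `k` new species. -/
def projNew {s k : ℕ} (v : Fin (s + k) → ℝ) : Fin k → ℝ := fun j => v (Fin.natAdd s j)

/-!
Splitting `C(j) → D(j)` into `C(j) → Z(j) → D(j)` changes each term of `δ = c - ℓ - rk` by the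
same amount. The new-species parts of the `Z(j)` are linearly independent, so the `Z(j)` are
`m` pairwise distinct complexes not present before: `c` grows by `m`. Each `Z(j)` is linked to
`C(j)`, and collapsing `Z(j)` onto `C(j)` turns paths of `N'` into paths of `N`, so `ℓ` is
unchanged. Finally the stoichiometric subspace of `N'` is that of `N` (padded by zeros) plus the
span of the `Z(j) - C(j)`; the first lies in the kernel of the projection to the new species and
the second maps onto `m` independent vectors, so `rk` grows by `m`.
-/

theorem Submodule.finrank_sup_span_eq_of_linearIndependent {K V W ι : Type*} [DivisionRing K]
    [AddCommGroup V] [Module K V] [AddCommGroup W] [Module K W] [FiniteDimensional K V]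
    [Fintype ι] {U : Submodule K V} {P : V →ₗ[K] W} (hU : U ≤ LinearMap.ker P) {a : ι → V}
    (ha : LinearIndependent K (P ∘ a)) :
    Module.finrank K ↥(U ⊔ span K (Set.range a)) = Module.finrank K U + Fintype.card ι := by
  have hdisj : Disjoint U (span K (Set.range a)) :=
    ((Submodule.range_ker_disjoint ha).mono_right hU).symm
  have h := Submodule.finrank_sup_add_finrank_inf_eq U (span K (Set.range a))
  rwa [hdisj.eq_bot, finrank_bot, add_zero, finrank_span_eq_card ha.of_comp] at h

namespace Network

variable {s t : ℕ}

theorem mem_complexes {N : Network s} {C : Cplx s} :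
    C ∈ N.complexes ↔ ∃ r ∈ N.reactions, r.1 = C ∨ r.2 = C := by
  simp only [complexes, Finset.mem_union, Finset.mem_image]
  grind

theorem linked.symm {N : Network s} {C D : Cplx s} (h : N.linked C D) : N.linked D C :=
  haveI : Std.Symm N.step := ⟨fun _ _ => Or.symm⟩
  (inferInstance : Std.Symm (Relation.ReflTransGen N.step)).symm _ _ h

theorem linkageClass_eq_iff {N : Network s} {C D : Cplx s} :
    N.linkageClass C = N.linkageClass D ↔ N.linked C D := by
  refine ⟨fun h => ?_, fun h => Set.ext fun E => ⟨h.symm.trans, h.trans⟩⟩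
  have hD : D ∈ N.linkageClass D := Relation.ReflTransGen.refl
  rwa [← h] at hD

theorem linked.map {N : Network s} {N' : Network t} (f : Cplx s → Cplx t)
    (hf : ∀ r ∈ N.reactions, N'.linked (f r.1) (f r.2)) {C D : Cplx s} (h : N.linked C D) :
    N'.linked (f C) (f D) :=
  Relation.ReflTransGen.lift' f (fun _ _ hCD => hCD.elim (hf _) fun h => (hf _ h).symm) _ _ h

/-- Pulling back along `f` is a bijection from the linkage classes of `N'` to those of `N`. -/
theorem numLinkage_eq_of_linked_iff {N : Network s} {N' : Network t} (f : Cplx s → Cplx t)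
    (hmaps : ∀ C ∈ N.complexes, f C ∈ N'.complexes)
    (hcover : ∀ X ∈ N'.complexes, ∃ C ∈ N.complexes, N'.linked X (f C))
    (hf : ∀ C D, N'.linked (f C) (f D) ↔ N.linked C D) :
    N'.numLinkage = N.numLinkage := by
  have hpre : ∀ C, f ⁻¹' N'.linkageClass (f C) = N.linkageClass C := fun C =>
    Set.ext fun D => hf C D
  have hclass : ∀ X ∈ N'.complexes,
      ∃ C ∈ N.complexes, N'.linkageClass X = N'.linkageClass (f C) :=
    fun X hX => (hcover X hX).imp fun _ ⟨hC, hXC⟩ => ⟨hC, linkageClass_eq_iff.2 hXC⟩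
  have himage : Set.preimage f '' {S | ∃ X ∈ N'.complexes, S = N'.linkageClass X}
      = {S | ∃ C ∈ N.complexes, S = N.linkageClass C} := by
    ext S
    constructor
    · rintro ⟨_, ⟨X, hX, rfl⟩, rfl⟩
      obtain ⟨C, hC, hXC⟩ := hclass X hX
      exact ⟨C, hC, by rw [hXC, hpre]⟩
    · rintro ⟨C, hC, rfl⟩
      exact ⟨_, ⟨f C, hmaps C hC, rfl⟩, hpre C⟩
  have hinj : Set.InjOn (Set.preimage f) {S | ∃ X ∈ N'.complexes, S = N'.linkageClass X} := by
    rintro _ ⟨X, hX, rfl⟩ _ ⟨Y, hY, rfl⟩ hXY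
    obtain ⟨C, -, hXC⟩ := hclass X hX
    obtain ⟨D, -, hYD⟩ := hclass Y hY
    rw [hXC, hYD, hpre, hpre, linkageClass_eq_iff, ← hf, ← linkageClass_eq_iff] at hXY
    rw [hXC, hYD, hXY]
  rw [numLinkage, numLinkage, ← himage, hinj.ncard_image]

end Network

section NewSpecies

variable {s k : ℕ}

theorem ext_castAdd (C : Cplx s) (l : Fin s) : ext (k := k) C (Fin.castAdd k l) = C l :=
  Fin.append_left C 0 l

theorem ext_injective : Function.Injective (ext (s := s) (k := k)) := fun C D h =>
  funext fun l => by rw [← ext_castAdd (k := k) C, h, ext_castAdd]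

def padZero (s k : ℕ) : (Fin s → ℝ) →ₗ[ℝ] (Fin (s + k) → ℝ) where
  toFun v := Fin.append v 0
  map_add' v w := by
    ext x
    refine Fin.addCases (fun l => ?_) (fun l => ?_) x <;> simp
  map_smul' c v := by
    ext x
    refine Fin.addCases (fun l => ?_) (fun l => ?_) x <;> simp

theorem padZero_injective : Function.Injective (padZero s k) := fun v w h =>
  funext fun l => by simpa [padZero] using congrFun h (Fin.castAdd k l)

theorem toR_ext (C : Cplx s) : toR (ext (k := k) C) = padZero s k (toR C) := by
  ext x
  refine Fin.addCases (fun l => ?_) (fun l => ?_) x <;> simp [toR, _root_.ext, padZero]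

def projNewₗ (s k : ℕ) : (Fin (s + k) → ℝ) →ₗ[ℝ] (Fin k → ℝ) :=
  LinearMap.funLeft ℝ ℝ (Fin.natAdd s)

theorem projNewₗ_apply (v : Fin (s + k) → ℝ) : projNewₗ s k v = projNew v := rfl

theorem projNewₗ_padZero (v : Fin s → ℝ) : projNewₗ s k (padZero s k v) = 0 := by
  ext l
  simp [projNewₗ, padZero]

theorem range_padZero_le_ker_projNewₗ :
    LinearMap.range (padZero s k) ≤ LinearMap.ker (projNewₗ s k) := by
  rintro _ ⟨v, rfl⟩
  exact projNewₗ_padZero v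

theorem projNew_toR_ext (C : Cplx s) : projNew (toR (ext (k := k) C)) = 0 := by
  rw [← projNewₗ_apply, toR_ext, projNewₗ_padZero]

theorem Network.span_projNew_eq_map_stoichSubspace (N : Network (s + k)) :
    span ℝ {w : Fin k → ℝ | ∃ r ∈ N.reactions, w = projNew (toR r.2 - toR r.1)}
      = N.stoichSubspace.map (projNewₗ s k) := by
  rw [Network.stoichSubspace, Submodule.map_span]
  congr 1
  ext w
  simp [projNewₗ_apply, eq_comm]

theorem injective_of_linearIndependent_projNew {ι : Type*} {Z : ι → Cplx (s + k)}
    (hu : LinearIndependent ℝ fun j => projNew (toR (Z j))) : Function.Injective Z :=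
  fun _ _ hab => hu.injective (congrArg (fun X => projNew (toR X)) hab)

theorem ne_ext_of_linearIndependent_projNew {ι : Type*} {Z : ι → Cplx (s + k)}
    (hu : LinearIndependent ℝ fun j => projNew (toR (Z j))) (j : ι) (C : Cplx s) :
    Z j ≠ ext C := fun hZC => hu.ne_zero j (by simp only [hZC, projNew_toR_ext])

end NewSpecies

section Split

variable {s k m : ℕ}

def splitReactions (N : Network s) (split : Fin m → Cplx s × Cplx s)
    (Z : Fin m → Cplx (s + k)) : Finset (Cplx (s + k) × Cplx (s + k)) :=
  ((N.reactions \ Finset.univ.image split).image fun r => (ext r.1, ext r.2))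
    ∪ (Finset.univ.image fun j => (ext (split j).1, Z j))
    ∪ (Finset.univ.image fun j => (Z j, ext (split j).2))

variable {N : Network s} {N' : Network (s + k)} {split : Fin m → Cplx s × Cplx s}
  {Z : Fin m → Cplx (s + k)}

theorem mem_splitReactions {p : Cplx (s + k) × Cplx (s + k)} :
    p ∈ splitReactions N split Z ↔
      (∃ r ∈ N.reactions, r ∉ Set.range split ∧ (ext r.1, ext r.2) = p) ∨
      (∃ j, (ext (split j).1, Z j) = p) ∨ ∃ j, (Z j, ext (split j).2) = p := by
  simp [splitReactions, and_assoc]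

theorem complexes_eq_of_split (h : N'.reactions = splitReactions N split Z)
    (hmem : ∀ j, split j ∈ N.reactions) :
    N'.complexes = N.complexes.image ext ∪ Finset.univ.image Z := by
  ext X
  simp only [Finset.mem_union, Finset.mem_image, Finset.mem_univ, true_and,
    Network.mem_complexes, h, mem_splitReactions]
  constructor
  · rintro ⟨p, hp, hX⟩
    rcases hp with ⟨r, hr, -, rfl⟩ | ⟨j, rfl⟩ | ⟨j, rfl⟩ <;> rcases hX with rfl | rfl
    · exact Or.inl ⟨_, ⟨r, hr, Or.inl rfl⟩, rfl⟩
    · exact Or.inl ⟨_, ⟨r, hr, Or.inr rfl⟩, rfl⟩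
    · exact Or.inl ⟨_, ⟨_, hmem j, Or.inl rfl⟩, rfl⟩
    · exact Or.inr ⟨j, rfl⟩
    · exact Or.inr ⟨j, rfl⟩
    · exact Or.inl ⟨_, ⟨_, hmem j, Or.inr rfl⟩, rfl⟩
  · rintro (⟨C, ⟨r, hr, hrC⟩, rfl⟩ | ⟨j, rfl⟩)
    · by_cases hs : r ∈ Set.range split
      · obtain ⟨j, rfl⟩ := hs
        rcases hrC with rfl | rfl
        · exact ⟨_, Or.inr (Or.inl ⟨j, rfl⟩), Or.inl rfl⟩
        · exact ⟨_, Or.inr (Or.inr ⟨j, rfl⟩), Or.inr rfl⟩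
      · rcases hrC with rfl | rfl
        · exact ⟨_, Or.inl ⟨r, hr, hs, rfl⟩, Or.inl rfl⟩
        · exact ⟨_, Or.inl ⟨r, hr, hs, rfl⟩, Or.inr rfl⟩
    · exact ⟨_, Or.inr (Or.inl ⟨j, rfl⟩), Or.inr rfl⟩

theorem numComplexes_eq_of_split (h : N'.reactions = splitReactions N split Z)
    (hmem : ∀ j, split j ∈ N.reactions) (hZ : Function.Injective Z)
    (hZext : ∀ j C, Z j ≠ ext C) :
    N'.numComplexes = N.numComplexes + m := by
  have hdisj : Disjoint (N.complexes.image ext) (Finset.univ.image Z) := by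
    simp only [Finset.disjoint_left, Finset.mem_image, Finset.mem_univ, true_and]
    rintro _ ⟨C, -, rfl⟩ ⟨j, hj⟩
    exact hZext j C hj
  rw [Network.numComplexes, complexes_eq_of_split h hmem, Finset.card_union_of_disjoint hdisj,
    Finset.card_image_of_injective _ ext_injective, Finset.card_image_of_injective _ hZ,
    Finset.card_univ, Fintype.card_fin, Network.numComplexes]

theorem stoichSubspace_eq_of_split (h : N'.reactions = splitReactions N split Z)
    (hmem : ∀ j, split j ∈ N.reactions) :
    N'.stoichSubspace = N.stoichSubspace.map (padZero s k)
      ⊔ span ℝ (Set.range fun j => toR (Z j) - toR (ext (split j).1)) := by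
  set a := fun j => toR (Z j) - toR (ext (k := k) (split j).1)
  have hreact : ∀ r : Cplx s × Cplx s,
      padZero s k (toR r.2 - toR r.1) = toR (ext (k := k) r.2) - toR (ext r.1) := fun r => by
    rw [map_sub, toR_ext, toR_ext]
  have hsplit : ∀ j, padZero s k (toR (split j).2 - toR (split j).1)
      = (toR (ext (split j).2) - toR (Z j)) + a j := fun j => by
    rw [hreact, sub_add_sub_cancel]
  have hold : ∀ r ∈ N.reactions, r ∉ Set.range split →
      toR (ext (k := k) r.2) - toR (ext r.1) ∈ N'.stoichSubspace := fun r hr hs =>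
    subset_span ⟨_, h ▸ mem_splitReactions.2 (Or.inl ⟨r, hr, hs, rfl⟩), rfl⟩
  have hfst : ∀ j, a j ∈ N'.stoichSubspace := fun j =>
    subset_span ⟨_, h ▸ mem_splitReactions.2 (Or.inr (Or.inl ⟨j, rfl⟩)), rfl⟩
  have hsnd : ∀ j, toR (ext (split j).2) - toR (Z j) ∈ N'.stoichSubspace := fun j =>
    subset_span ⟨_, h ▸ mem_splitReactions.2 (Or.inr (Or.inr ⟨j, rfl⟩)), rfl⟩
  apply le_antisymm
  · rw [Network.stoichSubspace, span_le]
    rintro _ ⟨r, hr, rfl⟩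
    rcases mem_splitReactions.1 (h ▸ hr) with ⟨q, hq, -, rfl⟩ | ⟨j, rfl⟩ | ⟨j, rfl⟩
    · rw [← hreact]
      exact mem_sup_left (mem_map_of_mem (subset_span ⟨q, hq, rfl⟩))
    · exact mem_sup_right (subset_span ⟨j, rfl⟩)
    · rw [eq_sub_of_add_eq (hsplit j).symm]
      exact sub_mem (mem_sup_left (mem_map_of_mem (subset_span ⟨_, hmem j, rfl⟩)))
        (mem_sup_right (subset_span ⟨j, rfl⟩))
  · refine sup_le ?_ (span_le.2 (Set.range_subset_iff.2 hfst))
    rw [Network.stoichSubspace, map_span, span_le]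
    rintro _ ⟨_, ⟨r, hr, rfl⟩, rfl⟩
    by_cases hs : r ∈ Set.range split
    · obtain ⟨j, rfl⟩ := hs
      rw [hsplit]
      exact add_mem (hsnd j) (hfst j)
    · rw [hreact]
      exact hold r hr hs

theorem linked_split_fst (h : N'.reactions = splitReactions N split Z) (j : Fin m) :
    N'.linked (ext (split j).1) (Z j) :=
  .single (Or.inl (h ▸ mem_splitReactions.2 (Or.inr (Or.inl ⟨j, rfl⟩))))

theorem linked_split_snd (h : N'.reactions = splitReactions N split Z) (j : Fin m) :
    N'.linked (Z j) (ext (split j).2) :=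
  .single (Or.inl (h ▸ mem_splitReactions.2 (Or.inr (Or.inr ⟨j, rfl⟩))))

theorem linked_ext_iff_of_split (h : N'.reactions = splitReactions N split Z)
    (hmem : ∀ j, split j ∈ N.reactions) (hZ : Function.Injective Z)
    (hZext : ∀ j C, Z j ≠ ext C) (C D : Cplx s) :
    N'.linked (ext C) (ext D) ↔ N.linked C D := by
  constructor
  · -- collapse each `Z j` onto the source of the reaction it splits
    let g : Cplx (s + k) → Cplx s :=
      Function.extend Z (fun j => (split j).1) fun X l => X (Fin.castAdd k l)
    have hg_ext : ∀ C, g (ext C) = C := fun C =>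
      (Function.extend_apply' _ _ _ fun ⟨j, hj⟩ => hZext j C hj).trans (funext (ext_castAdd C))
    have hg_Z : ∀ j, g (Z j) = (split j).1 := hZ.extend_apply _ _
    intro hCD
    rw [← hg_ext C, ← hg_ext D]
    refine hCD.map g fun r hr => ?_
    rcases mem_splitReactions.1 (h ▸ hr) with ⟨q, hq, -, rfl⟩ | ⟨j, rfl⟩ | ⟨j, rfl⟩
    · rw [hg_ext, hg_ext]
      exact .single (Or.inl hq)
    · rw [hg_ext, hg_Z]
      exact .refl
    · rw [hg_ext, hg_Z]
      exact .single (Or.inl (hmem j))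
  · refine Network.linked.map ext fun r hr => ?_
    by_cases hs : r ∈ Set.range split
    · obtain ⟨j, rfl⟩ := hs
      exact (linked_split_fst h j).trans (linked_split_snd h j)
    · exact .single (Or.inl (h ▸ mem_splitReactions.2 (Or.inl ⟨r, hr, hs, rfl⟩)))

theorem numLinkage_eq_of_split (h : N'.reactions = splitReactions N split Z)
    (hmem : ∀ j, split j ∈ N.reactions) (hZ : Function.Injective Z)
    (hZext : ∀ j C, Z j ≠ ext C) :
    N'.numLinkage = N.numLinkage := by
  have hcx := complexes_eq_of_split h hmem
  refine Network.numLinkage_eq_of_linked_iff ext (fun C hC => ?_) (fun X hX => ?_)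
    (linked_ext_iff_of_split h hmem hZ hZext)
  · exact hcx ▸ Finset.mem_union_left _ (Finset.mem_image_of_mem _ hC)
  · rw [hcx, Finset.mem_union, Finset.mem_image, Finset.mem_image] at hX
    rcases hX with ⟨C, hC, rfl⟩ | ⟨j, -, rfl⟩
    · exact ⟨C, hC, .refl⟩
    · exact ⟨_, Network.mem_complexes.2 ⟨_, hmem j, Or.inl rfl⟩, (linked_split_fst h j).symm⟩

theorem projNewₗ_comp_split_sub :
    projNewₗ s k ∘ (fun j => toR (Z j) - toR (ext (split j).1))
      = fun j => projNew (toR (Z j)) := by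
  ext j : 1
  rw [Function.comp_apply, map_sub, projNewₗ_apply, projNewₗ_apply, projNew_toR_ext, sub_zero]

theorem linearIndependent_projNew_of_split (h : N'.reactions = splitReactions N split Z)
    (hmem : ∀ j, split j ∈ N.reactions)
    (hrank : Module.finrank ℝ (span ℝ
        {w : Fin k → ℝ | ∃ r ∈ N'.reactions, w = projNew (toR r.2 - toR r.1)}) = m) :
    LinearIndependent ℝ fun j => projNew (toR (Z j)) := by
  have hpadded : (N.stoichSubspace.map (padZero s k)).map (projNewₗ s k) = ⊥ :=
    le_bot_iff.1 <| map_le_iff_le_comap.2 <|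
      LinearMap.map_le_range.trans range_padZero_le_ker_projNewₗ
  have hspan : span ℝ {w : Fin k → ℝ | ∃ r ∈ N'.reactions, w = projNew (toR r.2 - toR r.1)}
      = span ℝ (Set.range fun j => projNew (toR (Z j))) := by
    rw [N'.span_projNew_eq_map_stoichSubspace, stoichSubspace_eq_of_split h hmem,
      Submodule.map_sup, hpadded, bot_sup_eq, map_span, ← Set.range_comp, projNewₗ_comp_split_sub]
  rw [linearIndependent_iff_card_eq_finrank_span, Fintype.card_fin, Set.finrank, ← hspan, hrank]

theorem rank_eq_of_split (h : N'.reactions = splitReactions N split Z)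
    (hmem : ∀ j, split j ∈ N.reactions) (hu : LinearIndependent ℝ fun j => projNew (toR (Z j))) :
    N'.rank = N.rank + m := by
  rw [Network.rank, stoichSubspace_eq_of_split h hmem,
    Submodule.finrank_sup_span_eq_of_linearIndependent
      (LinearMap.map_le_range.trans range_padZero_le_ker_projNewₗ)
      (projNewₗ_comp_split_sub ▸ hu),
    Fintype.card_fin, (equivMapOfInjective _ padZero_injective _).finrank_eq.symm, Network.rank]

end Split

theorem stmt13_general {s m i : ℕ} (N : Network s) (N' : Network (s + (m + i)))
    (split : Fin m → Cplx s × Cplx s) (hmem : ∀ j, split j ∈ N.reactions)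
    (Z : Fin m → Cplx (s + (m + i)))
    (h : N'.reactions
        = ((N.reactions \ Finset.univ.image split).image fun r => (ext r.1, ext r.2))
          ∪ (Finset.univ.image fun j => (ext (split j).1, Z j))
          ∪ (Finset.univ.image fun j => (Z j, ext (split j).2)))
    (hrank : Module.finrank ℝ (Submodule.span ℝ
        {w : Fin (m + i) → ℝ | ∃ r ∈ N'.reactions, w = projNew (toR r.2 - toR r.1)}) = m) :
    N'.deficiency = N.deficiency := by
  have hu := linearIndependent_projNew_of_split h hmem hrank
  have hZ := injective_of_linearIndependent_projNew hu
  have hZext := ne_ext_of_linearIndependent_projNew hu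
  rw [Network.deficiency, Network.deficiency, numComplexes_eq_of_split h hmem hZ hZext,
    numLinkage_eq_of_split h hmem hZ hZext, rank_eq_of_split h hmem hu]
  push_cast
  ring

theorem stmt13 {s m i : ℕ} (hm : 0 < m) (N : Network s) (N' : Network (s + (m + i)))
    (split : Fin m → Cplx s × Cplx s) (hmem : ∀ j, split j ∈ N.reactions)
    (hinj : Function.Injective split)
    (Z : Fin m → Cplx (s + (m + i)))
    (h : N'.reactions
        = ((N.reactions \ Finset.univ.image split).image fun r => (ext r.1, ext r.2))
          ∪ (Finset.univ.image fun j => (ext (split j).1, Z j))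
          ∪ (Finset.univ.image fun j => (Z j, ext (split j).2)))
    (hrank : Module.finrank ℝ (Submodule.span ℝ
        {w : Fin (m + i) → ℝ | ∃ r ∈ N'.reactions, w = projNew (toR r.2 - toR r.1)}) = m) :
    N'.deficiency = N.deficiency :=
  stmt13_general N N' split hmem Z h hrank
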